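/- Let c > 0, g > 0, A ∈ ℝ, ξ₀ ∈ ℝ, and define U(ξ) = 8Acg / ( A²·e^{√g·(ξ+ξ₀)} - 8cg·e^{-√g·(ξ+ξ₀)} ). Then on every open interval where the denominator A²·e^{√g(ξ+ξ₀)} - 8cg·e^{-√g(ξ+ξ₀)} is nonzero, U satisfies U'' = g·U + U³/c, and hence u(x,t) = U(x - ct) satisfies the negative-order KdV equation (-u_xx/u)_t = 2u·u_x wherever additionally U ≠ 0. -/

import Mathlib

/-!
With `θ = √g (ξ + ξ₀)`, the denominator `D = A² e^θ - 8cg e^{-θ}` and its companion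
`E = A² e^θ + 8cg e^{-θ}` satisfy `D' = √g E`, `E' = √g D` and `E² - D² = 32 A² c g`.
Hence `U = N / D` has `U'' = N g (2E² - D²) / D³ = g U + 64 A² c g² N / D³`, which is
`g U + U³ / c` for `N = 8Acg`. For the wave, `-u_xx / u = -g - u² / c`, and since
`u_t = -c u_x` its time derivative is `2 u u_x`.
-/

open Filter Topology

noncomputable section

def expDiff (a b k ξ₀ ξ : ℝ) : ℝ :=
  a * Real.exp (k * (ξ + ξ₀)) - b * Real.exp (-(k * (ξ + ξ₀)))

def expSum (a b k ξ₀ ξ : ℝ) : ℝ :=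
  a * Real.exp (k * (ξ + ξ₀)) + b * Real.exp (-(k * (ξ + ξ₀)))

end

section ExpCombinations

variable (a b k ξ₀ ξ : ℝ)

lemma hasDerivAt_exp_mul_add : HasDerivAt (fun ξ => Real.exp (k * (ξ + ξ₀)))
    (k * Real.exp (k * (ξ + ξ₀))) ξ := by
  have h : HasDerivAt (fun ξ => k * (ξ + ξ₀)) k ξ := by
    simpa using ((hasDerivAt_id ξ).add_const ξ₀).const_mul k
  exact h.exp.congr_deriv (mul_comm _ _)

lemma hasDerivAt_exp_neg_mul_add : HasDerivAt (fun ξ => Real.exp (-(k * (ξ + ξ₀))))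
    (-k * Real.exp (-(k * (ξ + ξ₀)))) ξ := by
  have h : HasDerivAt (fun ξ => k * (ξ + ξ₀)) k ξ := by
    simpa using ((hasDerivAt_id ξ).add_const ξ₀).const_mul k
  exact h.neg.exp.congr_deriv (mul_comm _ _)

lemma hasDerivAt_expDiff : HasDerivAt (expDiff a b k ξ₀) (k * expSum a b k ξ₀ ξ) ξ :=
  (((hasDerivAt_exp_mul_add k ξ₀ ξ).const_mul a).sub
    ((hasDerivAt_exp_neg_mul_add k ξ₀ ξ).const_mul b)).congr_deriv (by unfold expSum; ring)

lemma hasDerivAt_expSum : HasDerivAt (expSum a b k ξ₀) (k * expDiff a b k ξ₀ ξ) ξ :=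
  (((hasDerivAt_exp_mul_add k ξ₀ ξ).const_mul a).add
    ((hasDerivAt_exp_neg_mul_add k ξ₀ ξ).const_mul b)).congr_deriv (by unfold expDiff; ring)

lemma expSum_sq_sub_expDiff_sq : expSum a b k ξ₀ ξ ^ 2 - expDiff a b k ξ₀ ξ ^ 2 = 4 * a * b := by
  have h : Real.exp (k * (ξ + ξ₀)) * Real.exp (-(k * (ξ + ξ₀))) = 1 := by
    rw [← Real.exp_add, add_neg_cancel, Real.exp_zero]
  unfold expSum expDiff
  linear_combination (4 * a * b) * h

end ExpCombinations

lemma deriv_deriv_const_div {D E : ℝ → ℝ} {k C N ξ : ℝ}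
    (hD : ∀ η, HasDerivAt D (k * E η) η) (hE : ∀ η, HasDerivAt E (k * D η) η)
    (hC : E ξ ^ 2 - D ξ ^ 2 = C) (hξ : D ξ ≠ 0) :
    deriv (deriv fun η => N / D η) ξ = k ^ 2 * (N / D ξ) + 2 * C * k ^ 2 * N / D ξ ^ 3 := by
  have hfirst : ∀ η, D η ≠ 0 → HasDerivAt (fun η => N / D η) (-(N * (k * E η)) / D η ^ 2) η :=
    fun η hη => ((hasDerivAt_const η N).div (hD η) hη).congr_deriv (by ring)
  have hev : deriv (fun η => N / D η) =ᶠ[𝓝 ξ] fun η => -(N * (k * E η)) / D η ^ 2 :=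
    ((hD ξ).continuousAt.eventually_ne hξ).mono fun η hη => (hfirst η hη).deriv
  have hsecond : HasDerivAt (fun η => -(N * (k * E η)) / D η ^ 2)
      ((-(N * (k * (k * D ξ))) * D ξ ^ 2 - -(N * (k * E ξ)) * (2 * D ξ ^ (2 - 1) * (k * E ξ)))
        / (D ξ ^ 2) ^ 2) ξ :=
    (((hE ξ).const_mul k).const_mul N).neg.div ((hD ξ).pow 2) (pow_ne_zero 2 hξ)
  rw [hev.deriv_eq, hsecond.deriv]
  field_simp
  linear_combination (2 * N * k ^ 2 * D ξ) * hC

lemma negKdV_of_travelingWave {U : ℝ → ℝ} {c g x t : ℝ} (hc : c ≠ 0)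
    (hode : ∀ᶠ ξ in 𝓝 (x - c * t), deriv (deriv U) ξ = g * U ξ + U ξ ^ 3 / c)
    (hdiff : DifferentiableAt ℝ U (x - c * t)) (hU : U (x - c * t) ≠ 0) :
    deriv (fun s => -(deriv (deriv fun y => U (y - c * s)) x) / U (x - c * s)) t
      = 2 * U (x - c * t) * deriv (fun y => U (y - c * t)) x := by
  have hwave : HasDerivAt (fun s => x - c * s) (-c) t := by
    simpa using ((hasDerivAt_id t).const_mul c).const_sub x
  have hshift : ∀ s, deriv (deriv fun y => U (y - c * s)) x = deriv (deriv U) (x - c * s) := by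
    intro s
    rw [funext fun y => deriv_comp_sub_const (f := U) (c * s) y, deriv_comp_sub_const]
  have hev : (fun s => -(deriv (deriv fun y => U (y - c * s)) x) / U (x - c * s))
      =ᶠ[𝓝 t] fun s => -g - U (x - c * s) ^ 2 / c := by
    have hnear := hwave.continuousAt.tendsto.eventually
      (hode.and (hdiff.continuousAt.eventually_ne hU))
    filter_upwards [hnear] with s ⟨hodes, hUs⟩
    rw [hshift, hodes]
    field_simp
    ring
  have hrhs : HasDerivAt (fun s => -g - U (x - c * s) ^ 2 / c)
      (-(2 * U (x - c * t) ^ (2 - 1) * (deriv U (x - c * t) * -c) / c)) t :=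
    (((hdiff.hasDerivAt.comp t hwave).pow 2).div_const c).const_sub (-g)
  rw [hev.deriv_eq, hrhs.deriv, deriv_comp_sub_const]
  field_simp
  ring

/-- For `c > 0`, `g > 0`, the profile
`U(ξ) = 8Acg / (A² e^{√g(ξ+ξ₀)} - 8cg e^{-√g(ξ+ξ₀)})` satisfies
`U'' = g U + U³/c` wherever the denominator is nonzero, and hence
`u(x,t) = U(x - ct)` satisfies the negative-order KdV equation
`(-u_xx/u)_t = 2 u u_x` wherever additionally `U ≠ 0`. -/
theorem exponential_traveling_wave_solutions
    (c g A ξ₀ : ℝ) (hc : 0 < c) (hg : 0 < g) :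
    let D : ℝ → ℝ := fun ξ =>
      A ^ 2 * Real.exp (Real.sqrt g * (ξ + ξ₀))
        - 8 * c * g * Real.exp (-(Real.sqrt g * (ξ + ξ₀)))
    let U : ℝ → ℝ := fun ξ => 8 * A * c * g / D ξ
    let u : ℝ → ℝ → ℝ := fun x t => U (x - c * t)
    (∀ ξ : ℝ, D ξ ≠ 0 → deriv (deriv U) ξ = g * U ξ + U ξ ^ 3 / c)
    ∧ (∀ x t : ℝ, D (x - c * t) ≠ 0 → U (x - c * t) ≠ 0 →
        deriv (fun s => -(deriv (deriv (fun y => u y s)) x) / u x s) t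
          = 2 * u x t * deriv (fun y => u y t) x) := by
  intro D U u
  have hD : ∀ ξ, HasDerivAt D (Real.sqrt g * expSum (A ^ 2) (8 * c * g) (Real.sqrt g) ξ₀ ξ) ξ :=
    hasDerivAt_expDiff _ _ _ _
  have hode : ∀ ξ, D ξ ≠ 0 → deriv (deriv U) ξ = g * U ξ + U ξ ^ 3 / c := by
    intro ξ hξ
    rw [deriv_deriv_const_div hD (hasDerivAt_expSum _ _ _ _) (expSum_sq_sub_expDiff_sq _ _ _ _ _) hξ,
      Real.sq_sqrt hg.le]
    simp only [U]
    field_simp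
    ring
  refine ⟨hode, fun x t hDxt hU => ?_⟩
  exact negKdV_of_travelingWave hc.ne'
    (((hD _).continuousAt.eventually_ne hDxt).mono hode)
    ((differentiableAt_const _).div (hD _).differentiableAt hDxt) hU
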